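/- Let G be a finite simple graph with vertex set V, let P be a predicate on subsets of V, and let S, S' ⊆ V with |S| = |S'| = k, both satisfying P, such that at least one TJ(P)-sequence from S to S' exists. Let C_1, …, C_t be pairwise disjoint subsets of V, each disjoint from S ∪ S', such that for every pair p ≠ q there exists a graph automorphism η of G with η(C_p) = C_q, η(C_q) = C_p, η(v) = v for every v ∉ C_p ∪ C_q, and P(X) holds if and only if P(η(X)) holds for every X ⊆ V. If t > k, then for every I ⊆ {1,…,t} with |I| = k there is a TJ(P)-sequence S_0, …, S_ℓ from S to S' of minimum length such that for every i ∉ I and every 0 ≤ j ≤ ℓ, C_i ∩ S_j = ∅. -/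

import Mathlib

/-!
Take a minimum-length sequence and repair it from the front. If `s (e + 1)` is the first set
meeting a block `C i` with `i ∉ I`, the token that has just jumped in is its only vertex in such
a block, so its other `k - 1` tokens miss some block `C q` with `q ∈ I`. The automorphism
swapping `C i` and `C q` fixes `S'`; applying it to `s (e + 1), …, s ℓ` moves that token into
`C q`. Either the jump from `s e` to the new set is again a single jump, and the first `e + 2`
sets now avoid the blocks outside `I`, or the new set is `s e` itself, and dropping the
repetition would give a shorter sequence.
-/

/-- `TJSeq P seq ℓ S S'` : the sequence `seq 0, …, seq ℓ` is a TJ(P)-sequence from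
`S` to `S'` (of length `ℓ`): consecutive sets differ by a single token jump and
all sets satisfy `P`. -/
def TJSeq {α : Type*} [DecidableEq α] (P : Finset α → Prop)
    (seq : ℕ → Finset α) (ℓ : ℕ) (S S' : Finset α) : Prop :=
  seq 0 = S ∧ seq ℓ = S' ∧ (∀ i ≤ ℓ, P (seq i)) ∧
    ∀ i < ℓ, (seq i \ seq (i + 1)).card = 1 ∧ (seq (i + 1) \ seq i).card = 1

open Finset Function

section TokenJumping

variable {α : Type*} [DecidableEq α]

def TJStep (A B : Finset α) : Prop :=
  (A \ B).card = 1 ∧ (B \ A).card = 1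

namespace TJStep

variable {A B : Finset α}

theorem card_eq (h : TJStep A B) : A.card = B.card :=
  card_sdiff_eq_card_sdiff_iff.mp (h.1.trans h.2.symm)

theorem image {f : α → α} (hf : Injective f) (h : TJStep A B) :
    TJStep (A.image f) (B.image f) := by
  simp only [TJStep, ← image_sdiff _ _ hf, card_image_of_injective _ hf]
  exact h

theorem eq_or_insert_erase {v w : α} (h : TJStep A B) (hvB : v ∈ B) (hvA : v ∉ A)
    (hwB : w ∉ B) : insert w (B.erase v) = A ∨ TJStep A (insert w (B.erase v)) := by
  obtain ⟨u, hu⟩ := card_eq_one.mp h.1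
  have hAB : ∀ x, x ∈ A → x ∉ B → x = u := fun x hxA hxB =>
    mem_singleton.mp (hu ▸ mem_sdiff.mpr ⟨hxA, hxB⟩)
  have huA : u ∈ A ∧ u ∉ B := mem_sdiff.mp (hu ▸ mem_singleton_self u)
  obtain ⟨v', hv'⟩ := card_eq_one.mp h.2
  have hBA : ∀ x, x ∈ B → x ∉ A → x = v := fun x hxB hxA =>
    (mem_singleton.mp (hv' ▸ mem_sdiff.mpr ⟨hxB, hxA⟩)).trans
      (mem_singleton.mp (hv' ▸ mem_sdiff.mpr ⟨hvB, hvA⟩)).symm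
  by_cases hwA : w ∈ A
  · left
    obtain rfl := hAB w hwA hwB
    ext x
    simp only [mem_insert, mem_erase]
    grind
  · right
    refine ⟨card_eq_one.mpr ⟨u, ?_⟩, card_eq_one.mpr ⟨w, ?_⟩⟩ <;>
    · ext x
      simp only [mem_sdiff, mem_insert, mem_erase, mem_singleton]
      grind

end TJStep

variable {P : Finset α → Prop} {s : ℕ → Finset α} {ℓ : ℕ} {S S' : Finset α}

namespace TJSeq

theorem step (h : TJSeq P s ℓ S S') {i : ℕ} (hi : i < ℓ) : TJStep (s i) (s (i + 1)) :=
  h.2.2.2 i hi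

theorem card_eq (h : TJSeq P s ℓ S S') {j : ℕ} (hj : j ≤ ℓ) : (s j).card = S.card := by
  induction j with
  | zero => rw [h.1]
  | succ j ih => rw [← (h.step hj).card_eq, ih (by omega)]

theorem take (h : TJSeq P s ℓ S S') {e : ℕ} (he : e ≤ ℓ) : TJSeq P s e S (s e) :=
  ⟨h.1, rfl, fun i hi => h.2.2.1 i (by omega), fun i hi => h.step (by omega)⟩

theorem drop (h : TJSeq P s ℓ S S') {e : ℕ} (he : e ≤ ℓ) :
    TJSeq P (fun j => s (e + j)) (ℓ - e) (s e) S' :=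
  ⟨rfl, by simpa [Nat.add_sub_cancel' he] using h.2.1, fun i hi => h.2.2.1 _ (by omega),
    fun i hi => h.step (i := e + i) (by omega)⟩

theorem image {f : α → α} (hf : Injective f) (hP : ∀ X, P X → P (X.image f))
    (h : TJSeq P s ℓ S S') :
    TJSeq P (fun j => (s j).image f) ℓ (S.image f) (S'.image f) :=
  ⟨congrArg _ h.1, congrArg _ h.2.1, fun i hi => hP _ (h.2.2.1 i hi),
    fun _ hi => (h.step hi).image hf⟩

theorem single {A B : Finset α} (hA : P A) (hB : P B) (h : TJStep A B) :
    TJSeq P (fun j => if j = 0 then A else B) 1 A B :=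
  ⟨rfl, rfl, fun i _ => by dsimp only; split_ifs <;> assumption, fun i hi => by
    obtain rfl : i = 0 := by omega
    exact h⟩

theorem append {s' : ℕ → Finset α} {ℓ' : ℕ} {S'' : Finset α} (h : TJSeq P s ℓ S S')
    (h' : TJSeq P s' ℓ' S' S'') :
    TJSeq P (fun j => if j ≤ ℓ then s j else s' (j - ℓ)) (ℓ + ℓ') S S'' := by
  refine ⟨by simp [h.1], ?_, fun i hi => ?_, fun i hi => ?_⟩
  · by_cases hℓ' : ℓ' = 0
    · simp [hℓ', h.2.1, ← h'.2.1, h'.1]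
    · simp [show ¬ℓ + ℓ' ≤ ℓ by omega, h'.2.1]
  · dsimp only
    split_ifs
    · exact h.2.2.1 i (by omega)
    · exact h'.2.2.1 _ (by omega)
  · show TJStep (if i ≤ ℓ then s i else s' (i - ℓ))
      (if i + 1 ≤ ℓ then s (i + 1) else s' (i + 1 - ℓ))
    by_cases hiℓ : i < ℓ
    · simpa [hiℓ.le, show i + 1 ≤ ℓ by omega] using h.step hiℓ
    · have := h'.step (i := i - ℓ) (by omega)
      rw [show i - ℓ + 1 = i + 1 - ℓ by omega] at this
      by_cases hiℓ' : i = ℓ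
      · subst hiℓ'
        simpa [h.2.1, ← h'.1] using this
      · simpa [show ¬i ≤ ℓ by omega, show ¬i + 1 ≤ ℓ by omega] using this

end TJSeq

theorem exists_tjSeq_minimal (h : ∃ s ℓ, TJSeq P s ℓ S S') :
    ∃ s ℓ, TJSeq P s ℓ S S' ∧ ∀ s' ℓ', TJSeq P s' ℓ' S S' → ℓ ≤ ℓ' := by
  classical
  have hex : ∃ ℓ s, TJSeq P s ℓ S S' := by
    obtain ⟨s, ℓ, hs⟩ := h
    exact ⟨ℓ, s, hs⟩
  obtain ⟨s, hs⟩ := Nat.find_spec hex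
  exact ⟨s, _, hs, fun s' ℓ' h' => Nat.find_min' hex ⟨s', h'⟩⟩

end TokenJumping

theorem Finset.exists_mem_disjoint_of_card_lt {α ι : Type*} [DecidableEq α] {C : ι → Finset α}
    (hC : Pairwise (Disjoint on C)) {I : Finset ι} {X : Finset α} (h : X.card < I.card) :
    ∃ q ∈ I, Disjoint (C q) X := by
  by_contra! hmeet
  refine h.not_ge ?_
  calc I.card = ∑ q ∈ I, 1 := card_eq_sum_ones I
    _ ≤ ∑ q ∈ I, (C q ∩ X).card :=
      sum_le_sum fun q hq => card_pos.mpr (not_disjoint_iff_nonempty_inter.mp (hmeet q hq))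
    _ = (I.biUnion fun q => C q ∩ X).card :=
      (card_biUnion fun p _ q _ hpq => (hC hpq).mono inter_subset_left inter_subset_left).symm
    _ ≤ X.card := card_le_card (biUnion_subset.mpr fun _ _ => inter_subset_right)

theorem Finset.exists_mem_disjoint_of_card_le {α ι : Type*} [DecidableEq α] {C : ι → Finset α}
    (hC : Pairwise (Disjoint on C)) {I : Finset ι} {X : Finset α} {v : α} (hvX : v ∈ X)
    (hvC : ∀ q ∈ I, v ∉ C q) (h : X.card ≤ I.card) : ∃ q ∈ I, Disjoint (C q) X := by
  have hlt : (X.erase v).card < I.card := by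
    have := card_pos.mpr ⟨v, hvX⟩
    rw [card_erase_of_mem hvX]
    omega
  obtain ⟨q, hqI, hq⟩ := exists_mem_disjoint_of_card_lt hC hlt
  refine ⟨q, hqI, ?_⟩
  rwa [← insert_erase hvX, disjoint_insert_right, and_iff_right (hvC q hqI)]

theorem Finset.image_eq_self_of_forall {α : Type*} [DecidableEq α] {f : α → α} {X : Finset α}
    (h : ∀ x ∈ X, f x = x) : X.image f = X :=
  (image_congr h).trans image_id

theorem Finset.image_eq_insert_erase {α : Type*} [DecidableEq α] {f : α → α} {X : Finset α}
    {v : α} (hv : v ∈ X) (h : ∀ x ∈ X, x ≠ v → f x = x) :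
    X.image f = insert (f v) (X.erase v) := by
  rw [← insert_erase hv, image_insert, erase_insert (notMem_erase v X),
    image_eq_self_of_forall fun x hx => h x (mem_of_mem_erase hx) (ne_of_mem_erase hx)]

section Avoiding

variable {α ι : Type*} [DecidableEq α] {P : Finset α → Prop} {S S' : Finset α}
  {s : ℕ → Finset α} {ℓ e : ℕ} {f : α → α}

namespace TJSeq

theorem image_succ_ne_of_minimal (hs : TJSeq P s ℓ S S')
    (hmin : ∀ s' ℓ', TJSeq P s' ℓ' S S' → ℓ ≤ ℓ') (he : e < ℓ) (hf : Injective f)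
    (hfP : ∀ X, P X → P (X.image f)) (hfS' : S'.image f = S') :
    (s (e + 1)).image f ≠ s e := fun hback => by
  have htail := (hs.drop he).image hf hfP
  rw [hfS', hback] at htail
  have := hmin _ _ ((hs.take he.le).append htail)
  omega

theorem exists_image_tail (hs : TJSeq P s ℓ S S') (he : e < ℓ) (hf : Injective f)
    (hfP : ∀ X, P X → P (X.image f)) (hfS' : S'.image f = S')
    (hjump : TJStep (s e) ((s (e + 1)).image f)) :
    ∃ s', TJSeq P s' ℓ S S' ∧ (∀ j ≤ e, s' j = s j) ∧ s' (e + 1) = (s (e + 1)).image f := by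
  have htail := (hs.drop he).image hf hfP
  rw [hfS'] at htail
  have hstep := single (hs.2.2.1 e he.le) (hfP _ (hs.2.2.1 (e + 1) he)) hjump
  have hseq := (hs.take he.le).append (hstep.append htail)
  rw [show e + (1 + (ℓ - (e + 1))) = ℓ by omega] at hseq
  exact ⟨_, hseq, fun j hj => if_pos hj, by simp⟩

end TJSeq

def IsBlockMove (P : Finset α → Prop) (f : α → α) (A B : Finset α) : Prop :=
  Injective f ∧ Set.MapsTo f A B ∧ (∀ v, v ∉ A ∪ B → f v = v) ∧ ∀ X, P X → P (X.image f)

variable {C : ι → Finset α} {I : Finset ι}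

theorem TJSeq.exists_avoids_succ (hC : Pairwise (Disjoint on C))
    (hCS' : ∀ i, Disjoint (C i) S') (hcard : S.card = I.card)
    (hmove : ∀ p q, p ≠ q → ∃ f, IsBlockMove P f (C p) (C q)) (hs : TJSeq P s ℓ S S')
    (hmin : ∀ s' ℓ', TJSeq P s' ℓ' S S' → ℓ ≤ ℓ') (he : e < ℓ)
    (hpre : ∀ j ≤ e, ∀ i ∉ I, Disjoint (C i) (s j)) :
    ∃ s', TJSeq P s' ℓ S S' ∧ ∀ j ≤ e + 1, ∀ i ∉ I, Disjoint (C i) (s' j) := by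
  by_cases hgood : ∀ i ∉ I, Disjoint (C i) (s (e + 1))
  · refine ⟨s, hs, fun j hj => ?_⟩
    rcases Nat.le_add_one_iff.mp hj with hj | rfl
    · exact hpre j hj
    · exact hgood
  push Not at hgood
  obtain ⟨i, hiI, hi⟩ := hgood
  set B := s (e + 1)
  obtain ⟨v, hv⟩ := card_eq_one.mp (hs.step he).2
  have hvB : v ∈ B ∧ v ∉ s e := mem_sdiff.mp (hv ▸ mem_singleton_self v)
  have hnew : ∀ i' ∉ I, ∀ x ∈ C i', x ∈ B → x = v := fun i' hi' x hxC hxB =>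
    mem_singleton.mp (hv ▸ mem_sdiff.mpr ⟨hxB, disjoint_left.mp (hpre e le_rfl i' hi') hxC⟩)
  have hvC : v ∈ C i := by
    obtain ⟨x, hxC, hxB⟩ := not_disjoint_iff.mp hi
    exact hnew i hiI x hxC hxB ▸ hxC
  obtain ⟨q, hqI, hq⟩ := exists_mem_disjoint_of_card_le hC hvB.1
    (fun q hq => disjoint_right.mp (hC (ne_of_mem_of_not_mem hq hiI)) hvC)
    ((hs.card_eq he).trans hcard).le
  obtain ⟨f, hf, hfC, hfix, hfP⟩ := hmove i q (ne_of_mem_of_not_mem hqI hiI).symm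
  have hfB : B.image f = insert (f v) (B.erase v) := image_eq_insert_erase hvB.1 fun x hx hxv =>
    hfix x <| by
      rw [mem_union, not_or]
      exact ⟨fun hxC => hxv (hnew i hiI x hxC hx), fun hxC => disjoint_left.mp hq hxC hx⟩
  have hfS' : S'.image f = S' := image_eq_self_of_forall fun x hx => hfix x <| by
    rw [mem_union, not_or]
    exact ⟨fun hxC => disjoint_left.mp (hCS' i) hxC hx, fun hxC => disjoint_left.mp (hCS' q) hxC hx⟩
  rcases (hs.step he).eq_or_insert_erase hvB.1 hvB.2 (disjoint_left.mp hq (hfC hvC)) with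
    hback | hjump
  · exact absurd (hfB.trans hback) (hs.image_succ_ne_of_minimal hmin he hf hfP hfS')
  rw [← hfB] at hjump
  obtain ⟨s', hs', hpre', hnext⟩ := hs.exists_image_tail he hf hfP hfS' hjump
  refine ⟨s', hs', fun j hj i' hi' => ?_⟩
  rcases Nat.le_add_one_iff.mp hj with hj | rfl
  · exact hpre' j hj ▸ hpre j hj i' hi'
  rw [hnext, hfB, disjoint_insert_right]
  exact ⟨disjoint_left.mp (hC (ne_of_mem_of_not_mem hqI hi')) (hfC hvC),
    disjoint_right.mpr fun x hx hxC => ne_of_mem_erase hx (hnew i' hi' x hxC (mem_of_mem_erase hx))⟩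

theorem TJSeq.exists_avoids_of_minimal (hC : Pairwise (Disjoint on C))
    (hCS : ∀ i, Disjoint (C i) S) (hCS' : ∀ i, Disjoint (C i) S') (hcard : S.card = I.card)
    (hmove : ∀ p q, p ≠ q → ∃ f, IsBlockMove P f (C p) (C q)) (hs : TJSeq P s ℓ S S')
    (hmin : ∀ s' ℓ', TJSeq P s' ℓ' S S' → ℓ ≤ ℓ') :
    ∃ s', TJSeq P s' ℓ S S' ∧ ∀ j ≤ ℓ, ∀ i ∉ I, Disjoint (C i) (s' j) := by
  suffices ∀ e ≤ ℓ, ∃ s', TJSeq P s' ℓ S S' ∧ ∀ j ≤ e, ∀ i ∉ I, Disjoint (C i) (s' j) from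
    this ℓ le_rfl
  intro e he
  induction e with
  | zero =>
    refine ⟨s, hs, fun j hj i _ => ?_⟩
    rw [Nat.le_zero.mp hj, hs.1]
    exact hCS i
  | succ e ih =>
    obtain ⟨s', hs', hpre⟩ := ih (by omega)
    exact hs'.exists_avoids_succ hC hCS' hcard hmove hmin he hpre

end Avoiding

theorem stmt9_general {α : Type*} [DecidableEq α] (G : SimpleGraph α)
    (P : Finset α → Prop) (k : ℕ) (S S' : Finset α)
    (hkS : S.card = k)
    (hex : ∃ (seq : ℕ → Finset α) (ℓ : ℕ), TJSeq P seq ℓ S S')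
    (t : ℕ) (C : Fin t → Finset α)
    (hdisj : ∀ p q : Fin t, p ≠ q → Disjoint (C p) (C q))
    (hSS' : ∀ i, Disjoint (C i) (S ∪ S'))
    (hauto : ∀ p q : Fin t, p ≠ q → ∃ η : G ≃g G,
      (C p).image (fun v => η v) = C q ∧ (C q).image (fun v => η v) = C p ∧
      (∀ v, v ∉ C p ∪ C q → η v = v) ∧
      (∀ X : Finset α, P X ↔ P (X.image (fun v => η v))))
    (I : Finset (Fin t)) (hI : I.card = k) :
    ∃ (seq : ℕ → Finset α) (ℓ : ℕ), TJSeq P seq ℓ S S' ∧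
      (∀ (seq' : ℕ → Finset α) (ℓ' : ℕ), TJSeq P seq' ℓ' S S' → ℓ ≤ ℓ') ∧
      ∀ i : Fin t, i ∉ I → ∀ j ≤ ℓ, C i ∩ seq j = ∅ := by
  obtain ⟨s, ℓ, hs, hmin⟩ := exists_tjSeq_minimal hex
  have hmove : ∀ p q, p ≠ q → ∃ f, IsBlockMove P f (C p) (C q) := fun p q hpq => by
    obtain ⟨η, hηC, -, hfix, hP⟩ := hauto p q hpq
    exact ⟨η, η.injective, fun v hv => hηC ▸ mem_image_of_mem _ hv, hfix, fun X => (hP X).mp⟩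
  obtain ⟨s', hs', havoid⟩ := hs.exists_avoids_of_minimal (I := I) (fun p q => hdisj p q)
    (fun i => (hSS' i).mono_right subset_union_left)
    (fun i => (hSS' i).mono_right subset_union_right) (hkS.trans hI.symm) hmove hmin
  exact ⟨s', ℓ, hs', hmin, fun i hi j hj => disjoint_iff_inter_eq_empty.mp (havoid j hj i hi)⟩

/-- Let `G` be a finite graph, `P` a predicate on vertex subsets, and
`S, S'` two sets of size `k` satisfying `P` with some TJ(P)-sequence between them.
Let `C 1, …, C t` be pairwise disjoint sets, disjoint from `S ∪ S'`, any two of which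
can be swapped by a `P`-preserving automorphism of `G` fixing all other vertices.
If `t > k`, then for every `k`-element `I ⊆ {1,…,t}` there is a minimum-length
TJ(P)-sequence from `S` to `S'` avoiding all `C i` with `i ∉ I`. -/
theorem stmt9 {α : Type*} [DecidableEq α] [Fintype α] (G : SimpleGraph α)
    (P : Finset α → Prop) (k : ℕ) (S S' : Finset α)
    (hS : P S) (hS' : P S') (hkS : S.card = k) (hkS' : S'.card = k)
    (hex : ∃ (seq : ℕ → Finset α) (ℓ : ℕ), TJSeq P seq ℓ S S')
    (t : ℕ) (C : Fin t → Finset α)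
    (hdisj : ∀ p q : Fin t, p ≠ q → Disjoint (C p) (C q))
    (hSS' : ∀ i, Disjoint (C i) (S ∪ S'))
    (hauto : ∀ p q : Fin t, p ≠ q → ∃ η : G ≃g G,
      (C p).image (fun v => η v) = C q ∧ (C q).image (fun v => η v) = C p ∧
      (∀ v, v ∉ C p ∪ C q → η v = v) ∧
      (∀ X : Finset α, P X ↔ P (X.image (fun v => η v))))
    (htk : k < t) (I : Finset (Fin t)) (hI : I.card = k) :
    ∃ (seq : ℕ → Finset α) (ℓ : ℕ), TJSeq P seq ℓ S S' ∧
      (∀ (seq' : ℕ → Finset α) (ℓ' : ℕ), TJSeq P seq' ℓ' S S' → ℓ ≤ ℓ') ∧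
      ∀ i : Fin t, i ∉ I → ∀ j ≤ ℓ, C i ∩ seq j = ∅ :=
  stmt9_general G P k S S' hkS hex t C hdisj hSS' hauto I hI
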